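/- Let n ≥ 1, R > 0, t ≥ 0, let θ ∈ ℝⁿ be a unit vector, and let g ∈ L²(ℝⁿ) vanish outside the closed ball B̄(0,R). Then the function F(x) := 1_{{x·θ ≤ t}}(x) · ∫_{-∞}^0 g(x+sθ) ds belongs to L²(ℝⁿ) and satisfies ‖F‖_{L²(ℝⁿ)} ≤ (2R+t)·‖g‖_{L²(ℝⁿ)}. -/

import Mathlib

open MeasureTheory Set
open scoped RealInnerProductSpace ENNReal

/-!
If `⟪x, θ⟫ ≤ t`, the ray `x + sθ`, `s ≤ 0`, has left the ball `B̄(0, R)` once `s < -(R + t)`, so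
`F x` is an integral over an interval of length `R + t` and Cauchy–Schwarz gives
`|F x|² ≤ (R + t) ∫_{-(R+t)}^0 |g (x + sθ)|² ds`. Integrating in `x`, Tonelli and translation
invariance of Lebesgue measure give `‖F‖₂ ≤ (R + t) ‖g‖₂`. Measurability of `F` for a merely
a.e. measurable `g` comes from the map `(x, s) ↦ x + sθ` being quasi-measure-preserving.
-/

section CauchySchwarz

variable {α F : Type*} [MeasurableSpace α] [NormedAddCommGroup F] (μ : Measure α)

theorem eLpNorm_two_sq (f : α → F) : eLpNorm f 2 μ ^ 2 = ∫⁻ a, ‖f a‖ₑ ^ 2 ∂μ := by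
  simpa using eLpNorm_nnreal_pow_eq_lintegral (μ := μ) (f := f) (p := 2) two_ne_zero

theorem enorm_integral_sq_le [NormedSpace ℝ F] (f : α → F) :
    ‖∫ a, f a ∂μ‖ₑ ^ 2 ≤ μ univ * ∫⁻ a, ‖f a‖ₑ ^ 2 ∂μ := by
  by_cases hf : AEStronglyMeasurable f μ
  swap
  · simp [integral_undef fun h => hf h.aestronglyMeasurable]
  have hL1_le_L2 : eLpNorm f 1 μ ≤ eLpNorm f 2 μ * μ univ ^ (1 / 2 : ℝ) := by
    convert eLpNorm_le_eLpNorm_mul_rpow_measure_univ one_le_two hf using 3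
    norm_num
  calc ‖∫ a, f a ∂μ‖ₑ ^ 2 ≤ eLpNorm f 1 μ ^ 2 := by
        rw [eLpNorm_one_eq_lintegral_enorm]
        gcongr
        exact enorm_integral_le_lintegral_enorm f
    _ ≤ (eLpNorm f 2 μ * μ univ ^ (1 / 2 : ℝ)) ^ 2 := by gcongr
    _ = μ univ * ∫⁻ a, ‖f a‖ₑ ^ 2 ∂μ := by
      rw [mul_pow, eLpNorm_two_sq, ← ENNReal.rpow_natCast, ← ENNReal.rpow_mul]
      norm_num [mul_comm]

end CauchySchwarz

theorem quasiMeasurePreserving_add_comp {E α : Type*} [AddGroup E] [MeasurableSpace E]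
    [MeasurableAdd₂ E] [MeasurableSpace α] (μ : Measure E) [μ.IsAddRightInvariant] [SFinite μ]
    (ν : Measure α) [SFinite ν] {f : α → E} (hf : Measurable f) :
    Measure.QuasiMeasurePreserving (fun p : E × α => p.1 + f p.2) (μ.prod ν) μ := by
  have hm : Measurable fun p : E × α => p.1 + f p.2 := by fun_prop
  refine ⟨hm, Measure.AbsolutelyContinuous.mk fun N hN hN0 => ?_⟩
  rw [Measure.map_apply hm hN, Measure.prod_apply_symm (hm hN)]
  have hfiber (y : α) : μ ((fun x => (x, y)) ⁻¹' ((fun p : E × α => p.1 + f p.2) ⁻¹' N)) = 0 :=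
    (measure_preimage_add_right μ (f y) N).trans hN0
  simp [hfiber]

section HalfRay

variable {E F : Type*} [NormedAddCommGroup E] [InnerProductSpace ℝ E]

noncomputable def halfRayTransform [NormedAddCommGroup F] [NormedSpace ℝ F] (g : E → F) (θ x : E) :
    F :=
  ∫ s in Iic (0 : ℝ), g (x + s • θ)

theorem add_smul_notMem_closedBall {R t s : ℝ} {x θ : E} (hθ : ‖θ‖ = 1) (hx : ⟪x, θ⟫ ≤ t)
    (hs : s < -(R + t)) : x + s • θ ∉ Metric.closedBall 0 R := by
  have hinner : ⟪x + s • θ, θ⟫ = ⟪x, θ⟫ + s := by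
    rw [inner_add_left, real_inner_smul_left, real_inner_self_eq_norm_sq, hθ]
    ring
  have hle : -⟪x + s • θ, θ⟫ ≤ ‖x + s • θ‖ := by
    simpa [hθ] using (neg_le_abs _).trans (abs_real_inner_le_norm (x + s • θ) θ)
  rw [Metric.mem_closedBall, dist_zero_right, not_le]
  linarith

variable [NormedAddCommGroup F] [NormedSpace ℝ F]

theorem halfRayTransform_eq_setIntegral_Icc {R t : ℝ} {g : E → F} {x θ : E} (hθ : ‖θ‖ = 1)
    (hg : ∀ y ∉ Metric.closedBall 0 R, g y = 0) (hx : ⟪x, θ⟫ ≤ t) :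
    halfRayTransform g θ x = ∫ s in Icc (-(R + t)) 0, g (x + s • θ) := by
  refine setIntegral_eq_of_subset_of_forall_sdiff_eq_zero measurableSet_Iic Icc_subset_Iic_self
    fun s hs => hg _ (add_smul_notMem_closedBall hθ hx (lt_of_not_ge fun h => hs.2 ⟨h, hs.1⟩))

theorem enorm_indicator_halfRayTransform_sq_le {R t : ℝ} {g : E → F} {θ : E} (hθ : ‖θ‖ = 1)
    (hg : ∀ y ∉ Metric.closedBall 0 R, g y = 0) (x : E) :
    ‖{x : E | ⟪x, θ⟫ ≤ t}.indicator (halfRayTransform g θ) x‖ₑ ^ 2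
      ≤ ENNReal.ofReal (R + t) * ∫⁻ s in Icc (-(R + t)) 0, ‖g (x + s • θ)‖ₑ ^ 2 := by
  by_cases hx : ⟪x, θ⟫ ≤ t
  · rw [indicator_of_mem (show x ∈ {x : E | ⟪x, θ⟫ ≤ t} from hx),
      halfRayTransform_eq_setIntegral_Icc hθ hg hx]
    simpa using enorm_integral_sq_le (volume.restrict (Icc (-(R + t)) 0)) _
  · simp [indicator_of_notMem (show x ∉ {x : E | ⟪x, θ⟫ ≤ t} from hx)]

variable [MeasurableSpace E] [BorelSpace E] [SecondCountableTopology E] (μ : Measure E)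
  [μ.IsAddRightInvariant] [SFinite μ]

theorem aestronglyMeasurable_halfRayTransform {g : E → F} (hg : AEStronglyMeasurable g μ) (θ : E) :
    AEStronglyMeasurable (halfRayTransform g θ) μ :=
  (hg.comp_quasiMeasurePreserving (quasiMeasurePreserving_add_comp μ _
    (by fun_prop : Measurable fun s : ℝ => s • θ))).integral_prod_right'

theorem lintegral_enorm_indicator_halfRayTransform_sq_le {R t : ℝ} {g : E → F} {θ : E}
    (hθ : ‖θ‖ = 1) (hgm : AEStronglyMeasurable g μ)
    (hg : ∀ y ∉ Metric.closedBall 0 R, g y = 0) :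
    ∫⁻ x, ‖{x : E | ⟪x, θ⟫ ≤ t}.indicator (halfRayTransform g θ) x‖ₑ ^ 2 ∂μ
      ≤ ENNReal.ofReal (R + t) ^ 2 * ∫⁻ y, ‖g y‖ₑ ^ 2 ∂μ := by
  set ν := volume.restrict (Icc (-(R + t)) (0 : ℝ))
  have hmeas : AEMeasurable (fun p : E × ℝ => ‖g (p.1 + p.2 • θ)‖ₑ ^ 2) (μ.prod ν) :=
    ((hgm.comp_quasiMeasurePreserving (quasiMeasurePreserving_add_comp μ ν
      (by fun_prop : Measurable fun s : ℝ => s • θ))).enorm.pow_const 2)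
  calc ∫⁻ x, ‖{x : E | ⟪x, θ⟫ ≤ t}.indicator (halfRayTransform g θ) x‖ₑ ^ 2 ∂μ
      ≤ ∫⁻ x, ENNReal.ofReal (R + t) * ∫⁻ s, ‖g (x + s • θ)‖ₑ ^ 2 ∂ν ∂μ :=
        lintegral_mono (enorm_indicator_halfRayTransform_sq_le hθ hg)
    _ = ENNReal.ofReal (R + t) * ∫⁻ s, ∫⁻ x, ‖g (x + s • θ)‖ₑ ^ 2 ∂μ ∂ν := by
        rw [lintegral_const_mul' _ _ ENNReal.ofReal_ne_top, lintegral_lintegral_swap hmeas]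
    _ = ENNReal.ofReal (R + t) ^ 2 * ∫⁻ y, ‖g y‖ₑ ^ 2 ∂μ := by
        simp_rw [lintegral_add_right_eq_self (fun y => ‖g y‖ₑ ^ 2)]
        rw [setLIntegral_const, Real.volume_Icc]
        ring_nf

theorem eLpNorm_indicator_halfRayTransform_le {R t : ℝ} {g : E → F} {θ : E} (hθ : ‖θ‖ = 1)
    (hgm : AEStronglyMeasurable g μ) (hg : ∀ y ∉ Metric.closedBall 0 R, g y = 0) :
    eLpNorm ({x : E | ⟪x, θ⟫ ≤ t}.indicator (halfRayTransform g θ)) 2 μ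
      ≤ ENNReal.ofReal (R + t) * eLpNorm g 2 μ := by
  rw [← ENNReal.pow_le_pow_left_iff two_ne_zero, mul_pow, eLpNorm_two_sq, eLpNorm_two_sq]
  exact lintegral_enorm_indicator_halfRayTransform_sq_le μ hθ hgm hg

end HalfRay

theorem stmt_0_general {n : ℕ} (R t : ℝ) (hR : 0 < R)
    (θ : EuclideanSpace ℝ (Fin n)) (hθ : ‖θ‖ = 1)
    (g : EuclideanSpace ℝ (Fin n) → ℝ)
    (hg : MemLp g 2 volume)
    (hsupp : ∀ x, x ∉ Metric.closedBall (0 : EuclideanSpace ℝ (Fin n)) R → g x = 0) :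
    MemLp (fun x : EuclideanSpace ℝ (Fin n) =>
        Set.indicator {x : EuclideanSpace ℝ (Fin n) | ⟪x, θ⟫ ≤ t}
          (fun x => ∫ s in Iic (0 : ℝ), g (x + s • θ)) x) 2 volume ∧
    eLpNorm (fun x : EuclideanSpace ℝ (Fin n) =>
        Set.indicator {x : EuclideanSpace ℝ (Fin n) | ⟪x, θ⟫ ≤ t}
          (fun x => ∫ s in Iic (0 : ℝ), g (x + s • θ)) x) 2 volume
      ≤ ENNReal.ofReal (2 * R + t) * eLpNorm g 2 volume := by
  have hbound : eLpNorm ({x | ⟪x, θ⟫ ≤ t}.indicator (halfRayTransform g θ)) 2 volume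
      ≤ ENNReal.ofReal (2 * R + t) * eLpNorm g 2 volume :=
    (eLpNorm_indicator_halfRayTransform_le volume hθ hg.1 hsupp).trans <| by
      gcongr
      linarith
  have hS : MeasurableSet {x : EuclideanSpace ℝ (Fin n) | ⟪x, θ⟫ ≤ t} :=
    measurableSet_le (by fun_prop) measurable_const
  have hmeas := (aestronglyMeasurable_halfRayTransform volume hg.1 θ).indicator hS
  exact ⟨⟨hmeas, hbound.trans_lt (ENNReal.mul_lt_top ENNReal.ofReal_lt_top hg.2)⟩, hbound⟩

theorem stmt_0 {n : ℕ} (hn : 1 ≤ n) (R t : ℝ) (hR : 0 < R) (ht : 0 ≤ t)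
    (θ : EuclideanSpace ℝ (Fin n)) (hθ : ‖θ‖ = 1)
    (g : EuclideanSpace ℝ (Fin n) → ℝ)
    (hg : MemLp g 2 volume)
    (hsupp : ∀ x, x ∉ Metric.closedBall (0 : EuclideanSpace ℝ (Fin n)) R → g x = 0) :
    MemLp (fun x : EuclideanSpace ℝ (Fin n) =>
        Set.indicator {x : EuclideanSpace ℝ (Fin n) | ⟪x, θ⟫ ≤ t}
          (fun x => ∫ s in Iic (0 : ℝ), g (x + s • θ)) x) 2 volume ∧
    eLpNorm (fun x : EuclideanSpace ℝ (Fin n) =>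
        Set.indicator {x : EuclideanSpace ℝ (Fin n) | ⟪x, θ⟫ ≤ t}
          (fun x => ∫ s in Iic (0 : ℝ), g (x + s • θ)) x) 2 volume
      ≤ ENNReal.ofReal (2 * R + t) * eLpNorm g 2 volume :=
  stmt_0_general R t hR θ hθ g hg hsupp
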